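/- arXiv:1307.8396 — 11 statements merged into one kernel-verified Lean document; each statement's English description precedes it below -/
import Mathlib

section
/- Let m ≥ 1 be an integer. For a non-empty subset Z of ℤ/mℤ define δ_Z := min_{z₀ ∈ Z} max_{z ∈ Z, z ≠ z₀} gcd(m, z − z₀) if |Z| ≥ 2, and δ_Z := 1 if |Z| = 1. Then for all non-empty subsets X, Y of ℤ/mℤ, setting δ := min(δ_X, δ_Y), one has δ divides m and |X + Y| ≥ min(m/δ, |X| + |Y| − 1). -/
open Pointwise

/-- `δ_Z := min_{z₀ ∈ Z} max_{z ∈ Z, z ≠ z₀} gcd(m, z − z₀)` when `|Z| ≥ 2`,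
and `δ_Z := 1` otherwise. -/
noncomputable def deltaZ (m : ℕ) (Z : Set (ZMod m)) : ℕ :=
  if 2 ≤ Z.encard then
    sInf ((fun z₀ => sSup ((fun z => Nat.gcd m (z - z₀).val) '' (Z \ {z₀}))) '' Z)
  else 1

section Aux

variable {m : ℕ} [NeZero m]

/-- Chowla-style lemma: if `0 ∈ B` and every nonzero element of `B` has `gcd(m, b) ≤ δ`,
then `|A + B| ≥ min (m/δ) (|A| + |B| - 1)`. -/
lemma chowla_aux (δ : ℕ) :
    ∀ n (A B : Finset (ZMod m)), B.card ≤ n → A.Nonempty → (0 : ZMod m) ∈ B →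
      (∀ b ∈ B, b ≠ 0 → Nat.gcd m b.val ≤ δ) →
      min (m / δ) (A.card + B.card - 1) ≤ (A + B).card := by
  intro n
  induction n with
  | zero =>
    intro A B hcard _ h0 _
    exact absurd (Finset.card_pos.2 ⟨0, h0⟩) (by omega)
  | succ n ih =>
    intro A B hcard hA h0 hδ
    classical
    by_cases hB1 : B.card ≤ 1
    · have hBeq : B = {0} :=
        Finset.eq_singleton_iff_unique_mem.2
          ⟨h0, fun x hx => Finset.card_le_one.1 hB1 x hx 0 h0⟩
      have hAB : A + B = A := by
        rw [hBeq, Finset.add_singleton]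
        simp
      have hBc : B.card = 1 := by rw [hBeq]; simp
      rw [hAB, hBc]
      exact le_trans (min_le_right _ _) (by omega)
    · push_neg at hB1
      obtain ⟨b, hbB, hb0⟩ : ∃ b ∈ B, b ≠ 0 := by
        by_contra h
        push_neg at h
        have hsub : B ⊆ {0} := fun x hx => Finset.mem_singleton.2 (h x hx)
        have := Finset.card_le_card hsub
        simp at this
        omega
      by_cases hstab : ∀ a ∈ A, ∀ y ∈ B, a + y ∈ A
      · -- stable case: A contains a full coset of the cyclic group generated by b
        obtain ⟨a, ha⟩ := hA
        have hmem : ∀ k : ℕ, a + k • b ∈ A := by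
          intro k
          induction k with
          | zero => simpa using ha
          | succ k ihk =>
            have hrw : a + (k + 1) • b = (a + k • b) + b := by
              rw [succ_nsmul]; ring
            rw [hrw]
            exact hstab _ ihk b hbB
        have hinj : Set.InjOn (fun k : ℕ => a + k • b) ↑(Finset.range (addOrderOf b)) := by
          intro i hi j hj hij
          have h1 : i • b = j • b := add_left_cancel hij
          exact nsmul_injOn_Iio_addOrderOf (by simpa using hi) (by simpa using hj) h1
        set S : Finset (ZMod m) := (Finset.range (addOrderOf b)).image (fun k => a + k • b)
          with hSdef
        have hcardS : S.card = addOrderOf b := by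
          rw [hSdef, Finset.card_image_of_injOn hinj, Finset.card_range]
        have hSA : S ⊆ A := by
          intro x hx
          obtain ⟨k, _, rfl⟩ := Finset.mem_image.1 hx
          exact hmem k
        have hord : addOrderOf b = m / Nat.gcd m b.val := by
          conv_lhs => rw [← ZMod.natCast_zmod_val b]
          exact ZMod.addOrderOf_coe _ (NeZero.ne m)
        have hgcdpos : 0 < Nat.gcd m b.val :=
          Nat.gcd_pos_of_pos_left _ (Nat.pos_of_ne_zero (NeZero.ne m))
        have h1 : m / δ ≤ (A + B).card := by
          calc m / δ ≤ m / Nat.gcd m b.val := Nat.div_le_div_left (hδ b hbB hb0) hgcdpos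
            _ = S.card := by rw [hcardS, hord]
            _ ≤ A.card := Finset.card_le_card hSA
            _ ≤ (A + B).card := Finset.card_le_card_add_right ⟨b, hbB⟩
        exact le_trans (min_le_left _ _) h1
      · -- transform case
        push_neg at hstab
        obtain ⟨a, ha, b₁, hb₁, hnot⟩ := hstab
        set B' := B.filter (fun y => a + y ∈ A) with hB'def
        set T := B.filter (fun y => ¬ (a + y ∈ A)) with hTdef
        set A' := A ∪ B.image (fun y => a + y) with hA'def
        have h0B' : (0 : ZMod m) ∈ B' :=
          Finset.mem_filter.2 ⟨h0, by simpa using ha⟩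
        have hB'lt : B'.card < B.card :=
          Finset.card_lt_card
            ⟨Finset.filter_subset _ _,
              fun hsub => hnot ((Finset.mem_filter.1 (hsub hb₁)).2)⟩
        have hTsub : T.image (fun y => a + y) ⊆ (B.image (fun y => a + y)) \ A := by
          intro x hx
          obtain ⟨y, hy, rfl⟩ := Finset.mem_image.1 hx
          obtain ⟨hyB, hyn⟩ := Finset.mem_filter.1 hy
          exact Finset.mem_sdiff.2 ⟨Finset.mem_image_of_mem _ hyB, hyn⟩
        have hTcard : T.card ≤ ((B.image (fun y => a + y)) \ A).card := by
          calc T.card = (T.image (fun y => a + y)).card :=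
                (Finset.card_image_of_injective _ (add_right_injective a)).symm
            _ ≤ _ := Finset.card_le_card hTsub
        have hA'card : A.card + T.card ≤ A'.card := by
          have h2 := Finset.card_sdiff_add_card (B.image (fun y => a + y)) A
          have h3 : A'.card = ((B.image (fun y => a + y)) ∪ A).card := by
            rw [hA'def, Finset.union_comm]
          omega
        have hsplit : B'.card + T.card = B.card :=
          Finset.card_filter_add_card_filter_not (p := fun y => a + y ∈ A)
        have hsubsum : A' + B' ⊆ A + B := by
          intro x hx
          obtain ⟨u, hu, v, hv, rfl⟩ := Finset.mem_add.1 hx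
          obtain ⟨hvB, hvA⟩ := Finset.mem_filter.1 hv
          rcases Finset.mem_union.1 hu with huA | huim
          · exact Finset.add_mem_add huA hvB
          · obtain ⟨y, hy, rfl⟩ := Finset.mem_image.1 huim
            have hrw : a + y + v = (a + v) + y := by ring
            rw [hrw]
            exact Finset.add_mem_add hvA hy
        have hA'ne : A'.Nonempty := ⟨a, Finset.mem_union_left _ ha⟩
        have hδ' : ∀ y ∈ B', y ≠ 0 → Nat.gcd m y.val ≤ δ :=
          fun y hy => hδ y (Finset.mem_filter.1 hy).1
        have hrec := ih A' B' (by omega) hA'ne h0B' hδ'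
        calc min (m / δ) (A.card + B.card - 1)
            ≤ min (m / δ) (A'.card + B'.card - 1) := min_le_min le_rfl (by omega)
          _ ≤ (A' + B').card := hrec
          _ ≤ (A + B).card := Finset.card_le_card hsubsum

/-- Translated version: the distinguished element of `B` need not be `0`. -/
lemma chowla_aux' (δ : ℕ) (A B : Finset (ZMod m)) (hA : A.Nonempty) (z₀ : ZMod m)
    (hz₀ : z₀ ∈ B) (hδ : ∀ b ∈ B, b ≠ z₀ → Nat.gcd m (b - z₀).val ≤ δ) :
    min (m / δ) (A.card + B.card - 1) ≤ (A + B).card := by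
  classical
  set C := B.image (fun y => y - z₀) with hCdef
  have hinj : Function.Injective (fun y : ZMod m => y - z₀) := by
    intro u v h
    simpa using congrArg (fun t => t + z₀) h
  have h0C : (0 : ZMod m) ∈ C :=
    Finset.mem_image.2 ⟨z₀, hz₀, by simp⟩
  have hδC : ∀ c ∈ C, c ≠ 0 → Nat.gcd m c.val ≤ δ := by
    intro c hc hc0
    obtain ⟨y, hy, rfl⟩ := Finset.mem_image.1 hc
    exact hδ y hy (fun h => hc0 (by rw [h, sub_self]))
  have hCcard : C.card = B.card := Finset.card_image_of_injective _ hinj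
  have hACim : A + C = (A + B).image (fun y => y - z₀) := by
    ext x
    simp only [Finset.mem_add, Finset.mem_image, hCdef]
    constructor
    · rintro ⟨u, hu, v, ⟨y, hy, rfl⟩, rfl⟩
      exact ⟨u + y, ⟨u, hu, y, hy, rfl⟩, by ring⟩
    · rintro ⟨w, ⟨u, hu, y, hy, rfl⟩, rfl⟩
      exact ⟨u, hu, y - z₀, ⟨y, hy, rfl⟩, by ring⟩
  have hACcard : (A + C).card = (A + B).card := by
    rw [hACim, Finset.card_image_of_injective _ hinj]
  have hkey := chowla_aux (m := m) δ C.card A C le_rfl hA h0C hδC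
  rw [hACcard, hCcard] at hkey
  exact hkey

/-- Key structural property of `deltaZ`: it divides `m` and its defining bound is attained. -/
lemma deltaZ_spec (Z : Set (ZMod m)) (hZ : Z.Nonempty) :
    deltaZ m Z ∣ m ∧
      ∃ z₀ ∈ Z, ∀ z ∈ Z, z ≠ z₀ → Nat.gcd m ((z - z₀).val) ≤ deltaZ m Z := by
  by_cases h2 : 2 ≤ Z.encard
  · have hnt : 1 < Z.encard := lt_of_lt_of_le (by norm_num) h2
    have hval : deltaZ m Z =
        sInf ((fun z₀ => sSup ((fun z => Nat.gcd m (z - z₀).val) '' (Z \ {z₀}))) '' Z) := by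
      rw [deltaZ, if_pos h2]
    obtain ⟨z₀, hz₀, heq⟩ := Nat.sInf_mem (hZ.image
      (fun z₀ => sSup ((fun z => Nat.gcd m (z - z₀).val) '' (Z \ {z₀}))))
    set T := (fun z => Nat.gcd m (z - z₀).val) '' (Z \ {z₀}) with hTdef
    have hTne : T.Nonempty := by
      obtain ⟨z₁, hz₁, hne⟩ := Set.exists_ne_of_one_lt_encard hnt z₀
      exact ⟨_, ⟨z₁, ⟨hz₁, hne⟩, rfl⟩⟩
    have hTfin : T.Finite := (Set.toFinite _).image _
    have hdel : deltaZ m Z = sSup T := by rw [hval, ← heq]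
    constructor
    · obtain ⟨z, _, hzeq⟩ := hTne.csSup_mem hTfin
      rw [hdel, ← hzeq]
      exact Nat.gcd_dvd_left _ _
    · refine ⟨z₀, hz₀, fun z hz hzne => ?_⟩
      rw [hdel]
      exact le_csSup hTfin.bddAbove ⟨z, ⟨hz, hzne⟩, rfl⟩
  · have hdel : deltaZ m Z = 1 := by rw [deltaZ, if_neg h2]
    obtain ⟨z₀, hz₀⟩ := hZ
    refine ⟨by rw [hdel]; exact one_dvd m, z₀, hz₀, fun z hz hzne => ?_⟩
    exfalso
    apply h2
    have h1 : 1 < Z.encard := Set.one_lt_encard_iff.2 ⟨z, z₀, hz, hz₀, hzne⟩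
    have := Order.add_one_le_of_lt h1
    simpa [one_add_one_eq_two] using this

/-- One-sided version of the main theorem, using only `deltaZ m X`. -/
lemma oneSide (X Y : Set (ZMod m)) (hX : X.Nonempty) (hY : Y.Nonempty) :
    min ((m / deltaZ m X : ℕ) : ℕ∞) (X.encard + Y.encard - 1) ≤ (X + Y).encard := by
  classical
  obtain ⟨-, z₀, hz₀, hbound⟩ := deltaZ_spec X hX
  have hXY : (X + Y : Set (ZMod m)) = ↑(Y.toFinset + X.toFinset) := by
    rw [Finset.coe_add, Set.coe_toFinset, Set.coe_toFinset, add_comm]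
  have hkey := chowla_aux' (deltaZ m X) Y.toFinset X.toFinset (by simpa using hY) z₀
    (by simpa using hz₀) (fun b hb hbne => hbound b (by simpa using hb) hbne)
  rw [hXY, Set.encard_coe_eq_coe_finsetCard,
      Set.encard_eq_coe_toFinset_card X, Set.encard_eq_coe_toFinset_card Y]
  have hcast : ((min (m / deltaZ m X) (Y.toFinset.card + X.toFinset.card - 1) : ℕ) : ℕ∞)
      = min ((m / deltaZ m X : ℕ) : ℕ∞)
          ((X.toFinset.card : ℕ∞) + (Y.toFinset.card : ℕ∞) - 1) := by
    have h1 : ((min (m / deltaZ m X) (Y.toFinset.card + X.toFinset.card - 1) : ℕ) : ℕ∞)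
        = min ((m / deltaZ m X : ℕ) : ℕ∞)
            ((Y.toFinset.card + X.toFinset.card - 1 : ℕ) : ℕ∞) := by
      exact_mod_cast rfl
    rw [h1, ENat.coe_sub, Nat.cast_add, Nat.cast_one,
      add_comm ((Y.toFinset.card : ℕ∞))]
  rw [← hcast]
  exact_mod_cast hkey

end Aux

theorem stmt0 (m : ℕ) (hm : 1 ≤ m) (X Y : Set (ZMod m))
    (hX : X.Nonempty) (hY : Y.Nonempty) :
    min (deltaZ m X) (deltaZ m Y) ∣ m ∧
      min ((m / min (deltaZ m X) (deltaZ m Y) : ℕ) : ℕ∞)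
        (X.encard + Y.encard - 1) ≤ (X + Y).encard := by
  haveI : NeZero m := ⟨by omega⟩
  constructor
  · rcases le_total (deltaZ m X) (deltaZ m Y) with h | h
    · rw [min_eq_left h]; exact (deltaZ_spec X hX).1
    · rw [min_eq_right h]; exact (deltaZ_spec Y hY).1
  · rcases le_total (deltaZ m X) (deltaZ m Y) with h | h
    · rw [min_eq_left h]
      exact oneSide X Y hX hY
    · rw [min_eq_right h]
      have hcomm : X + Y = Y + X := add_comm X Y
      have henc : X.encard + Y.encard = Y.encard + X.encard := add_comm _ _
      rw [hcomm, henc]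
      exact oneSide Y X hY hX
end

section
/- Let m ≥ 1 be an integer and let X, Y be non-empty subsets of ℤ/mℤ. If there exists y₀ ∈ Y such that gcd(m, y − y₀) = 1 for every y ∈ Y with y ≠ y₀, then |X + Y| ≥ min(m, |X| + |Y| − 1). -/
open Pointwise

-- image under (· + c) commutes with pointwise addition
private lemma add_image_shift {m : ℕ} (A B : Finset (ZMod m)) (c : ZMod m) :
    A + B.image (· + c) = (A + B).image (· + c) := by
  ext z
  simp only [Finset.mem_image, Finset.mem_add]
  constructor
  · rintro ⟨x, hx, y, ⟨w, hw, rfl⟩, rfl⟩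
    exact ⟨x + w, ⟨x, hx, w, hw, rfl⟩, by ring⟩
  · rintro ⟨v, ⟨x, hx, w, hw, rfl⟩, rfl⟩
    exact ⟨x, hx, w + c, ⟨w, hw, rfl⟩, by ring⟩

private lemma chowla_finset (m : ℕ) [NeZero m] :
    ∀ n (X Y : Finset (ZMod m)), Y.card ≤ n → X.Nonempty → (0 : ZMod m) ∈ Y →
    (∀ y ∈ Y, y ≠ 0 → IsUnit y) →
    min m (X.card + Y.card - 1) ≤ (X + Y).card := by
  intro n
  induction n with
  | zero =>
    intro X Y hYn _ h0 _
    exact absurd (Finset.card_pos.2 ⟨0, h0⟩) (by omega)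
  | succ n ih =>
    intro X Y hYn hX h0 hu
    have hXsub : X ⊆ X + Y := fun x hx => Finset.mem_add.2 ⟨x, hx, 0, h0, add_zero x⟩
    by_cases hY1 : Y.card ≤ 1
    · -- Y = {0}
      have hYc : Y.card = 1 := le_antisymm hY1 (Finset.card_pos.2 ⟨0, h0⟩)
      calc min m (X.card + Y.card - 1) ≤ X.card := by rw [hYc]; simp
        _ ≤ (X + Y).card := Finset.card_le_card hXsub
    · -- pick a nonzero (unit) element u of Y
      push_neg at hY1
      obtain ⟨u, huY, hune⟩ : ∃ u ∈ Y, u ≠ 0 := by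
        obtain ⟨u, huY, hune⟩ := Finset.exists_mem_ne hY1 0
        exact ⟨u, huY, hune⟩
      by_cases hXY : ∀ a ∈ X, ∀ b ∈ Y, a + b ∈ X
      · -- X is invariant under +u, hence X = univ
        have hU : IsUnit u := hu u huY hune
        obtain ⟨x₀, hx₀⟩ := hX
        have hstep : ∀ x ∈ X, x + u ∈ X := fun x hx => hXY x hx u huY
        have hk : ∀ k : ℕ, x₀ + (k : ZMod m) * u ∈ X := by
          intro k
          induction k with
          | zero => simpa using hx₀
          | succ k ihk =>
            have h2 : x₀ + ((k + 1 : ℕ) : ZMod m) * u = (x₀ + (k : ZMod m) * u) + u := by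
              push_cast; ring
            rw [h2]
            exact hstep _ ihk
        have huniv : ∀ z : ZMod m, z ∈ X := by
          intro z
          obtain ⟨v, hv⟩ := hU
          have := hk ((z - x₀) * ↑v⁻¹).val
          rwa [ZMod.natCast_val, ZMod.cast_id, mul_assoc, ← hv,
            Units.inv_mul, mul_one, add_sub_cancel] at this
        have hXcard : X.card = m := by
          have : X = Finset.univ := Finset.eq_univ_iff_forall.2 huniv
          rw [this, Finset.card_univ, ZMod.card]
        calc min m (X.card + Y.card - 1) ≤ m := min_le_left _ _
          _ = X.card := hXcard.symm
          _ ≤ (X + Y).card := Finset.card_le_card hXsub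
      · -- Davenport transform
        push_neg at hXY
        obtain ⟨a, ha, b, hb, hab⟩ := hXY
        set T := Y.filter (fun y => a + y ∉ X) with hT
        have hTne : T.Nonempty := ⟨b, Finset.mem_filter.2 ⟨hb, hab⟩⟩
        have hTsub : T ⊆ Y := Finset.filter_subset _ _
        set X' := X ∪ T.image (a + ·) with hX'
        set Y' := Y \ T with hY'
        have hdisj : Disjoint X (T.image (a + ·)) := by
          rw [Finset.disjoint_right]
          rintro x hx
          obtain ⟨t, ht, rfl⟩ := Finset.mem_image.1 hx
          exact (Finset.mem_filter.1 ht).2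
        have hX'card : X'.card = X.card + T.card := by
          rw [hX', Finset.card_union_of_disjoint hdisj,
            Finset.card_image_of_injective _ (add_right_injective a)]
        have hY'card : Y'.card = Y.card - T.card := Finset.card_sdiff_of_subset hTsub
        have h0Y' : (0 : ZMod m) ∈ Y' := by
          rw [hY', Finset.mem_sdiff]
          refine ⟨h0, fun h0T => ?_⟩
          have := (Finset.mem_filter.1 h0T).2
          rw [add_zero] at this
          exact this ha
        have hsum : X' + Y' ⊆ X + Y := by
          intro z hz
          obtain ⟨x', hx', y', hy', rfl⟩ := Finset.mem_add.1 hz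
          obtain ⟨hy'Y, hy'T⟩ := Finset.mem_sdiff.1 hy'
          rcases Finset.mem_union.1 hx' with hxX | hxI
          · exact Finset.mem_add.2 ⟨x', hxX, y', hy'Y, rfl⟩
          · obtain ⟨t, htT, rfl⟩ := Finset.mem_image.1 hxI
            have hay' : a + y' ∈ X := by
              by_contra hc
              exact hy'T (Finset.mem_filter.2 ⟨hy'Y, hc⟩)
            exact Finset.mem_add.2 ⟨a + y', hay', t, hTsub htT, by ring⟩
        have hTle : T.card ≤ Y.card := Finset.card_le_card hTsub
        have hTpos : 1 ≤ T.card := Finset.card_pos.2 hTne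
        have hrec := ih X' Y' (by omega) (hX.mono Finset.subset_union_left) h0Y'
          (fun y hy hyne => hu y (Finset.mem_sdiff.1 hy).1 hyne)
        have hcards : X'.card + Y'.card = X.card + Y.card := by omega
        calc min m (X.card + Y.card - 1) = min m (X'.card + Y'.card - 1) := by rw [hcards]
          _ ≤ (X' + Y').card := hrec
          _ ≤ (X + Y).card := Finset.card_le_card hsum

theorem stmt1 (m : ℕ) (hm : 1 ≤ m) (X Y : Set (ZMod m))
    (hX : X.Nonempty) (hY : Y.Nonempty)
    (h : ∃ y₀ ∈ Y, ∀ y ∈ Y, y ≠ y₀ → Nat.gcd m (y - y₀).val = 1) :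
    min ((m : ℕ∞)) (X.encard + Y.encard - 1) ≤ (X + Y).encard := by
  haveI : NeZero m := ⟨by omega⟩
  obtain ⟨y₀, hy₀, hcop⟩ := h
  classical
  have hXf : X.Finite := Set.toFinite X
  have hYf : Y.Finite := Set.toFinite Y
  set A := hXf.toFinset with hA
  set B := hYf.toFinset with hB
  have hcoe : ((A + B : Finset (ZMod m)) : Set (ZMod m)) = X + Y := by
    rw [Finset.coe_add, Set.Finite.coe_toFinset, Set.Finite.coe_toFinset]
  have hXY : (X + Y).encard = ((A + B).card : ℕ∞) := by
    rw [← hcoe, Set.encard_coe_eq_coe_finsetCard]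
  rw [hXf.encard_eq_coe_toFinset_card, hYf.encard_eq_coe_toFinset_card, hXY, ← hA, ← hB]
  -- reduce to ℕ
  have hBpos : 1 ≤ B.card := Finset.card_pos.2 ⟨y₀, hYf.mem_toFinset.2 hy₀⟩
  have key : min m (A.card + B.card - 1) ≤ (A + B).card := by
    set B' := B.image (· + (-y₀)) with hB'
    have hB'card : B'.card = B.card :=
      Finset.card_image_of_injective _ (add_left_injective _)
    have hsum : A + B' = (A + B).image (· + (-y₀)) := add_image_shift A B (-y₀)
    have hsumcard : (A + B').card = (A + B).card := by
      rw [hsum, Finset.card_image_of_injective _ (add_left_injective _)]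
    have h0B' : (0 : ZMod m) ∈ B' :=
      Finset.mem_image.2 ⟨y₀, hYf.mem_toFinset.2 hy₀, by ring⟩
    have hunits : ∀ y ∈ B', y ≠ 0 → IsUnit y := by
      intro y hy hyne
      obtain ⟨w, hw, rfl⟩ := Finset.mem_image.1 hy
      have hwY : w ∈ Y := hYf.mem_toFinset.1 hw
      have hwne : w ≠ y₀ := by
        rintro rfl; exact hyne (by ring)
      have hg := hcop w hwY hwne
      have : IsUnit (((w - y₀).val : ℕ) : ZMod m) := by
        rw [ZMod.isUnit_iff_coprime]
        unfold Nat.Coprime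
        rw [Nat.gcd_comm]
        exact hg
      rwa [ZMod.natCast_val, ZMod.cast_id, sub_eq_add_neg] at this
    have hAne : A.Nonempty := by
      obtain ⟨x, hx⟩ := hX
      exact ⟨x, hXf.mem_toFinset.2 hx⟩
    have := chowla_finset m B'.card A B' le_rfl hAne h0B' hunits
    rw [hB'card, hsumcard] at this
    exact this
  calc min (m : ℕ∞) ((A.card : ℕ∞) + B.card - 1)
      = ((min m (A.card + B.card - 1) : ℕ) : ℕ∞) := by
        push_cast [Nat.cast_sub (by omega : 1 ≤ A.card + B.card)]
        rfl
    _ ≤ ((A + B).card : ℕ∞) := by exact_mod_cast key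
end

section
/- Let A be a cancellative monoid and let X, Y be subsets of A such that X^× + Y^× is non-empty. Then max(γ(X), γ(Y)) ≥ min(γ(X), γ(Y)) ≥ γ(X + Y) ≥ p(A). -/
open Pointwise

/-- The order of `z`: the cardinality (in `ℕ∞`) of the subsemigroup
`{z, z+z, z+z+z, …}` generated by `z`. -/
noncomputable def ord {A : Type*} [AddSemigroup A] (z : A) : ℕ∞ :=
  ((AddSubsemigroup.closure {z} : AddSubsemigroup A) : Set A).encard

/-- The Cauchy–Davenport constant of a subset `X` of a monoid:
`γ(X) = sup_{x₀ ∈ X^×} inf_{x ∈ X, x ≠ x₀} ord (x + (-x₀))`. -/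
noncomputable def gamma {A : Type*} [AddMonoid A] (X : Set A) : ℕ∞ :=
  ⨆ (u : AddUnits A) (_ : (u : A) ∈ X),
    ⨅ (x : A) (_ : x ∈ X ∧ x ≠ (u : A)), ord (x + ((-u : AddUnits A) : A))

/-- `p(A) = inf {ord z : z ∈ A, z ≠ 0}`. -/
noncomputable def pConst (A : Type*) [AddMonoid A] : ℕ∞ :=
  ⨅ (z : A) (_ : z ≠ 0), ord z

/-- Conjugation by a unit preserves `ord`. -/
lemma ord_conj {A : Type*} [AddMonoid A] (u : AddUnits A) (t : A) :
    ord ((u : A) + t + ((-u : AddUnits A) : A)) = ord t := by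
  have hadd : ∀ a b : A,
      (u : A) + (a + b) + ((-u : AddUnits A) : A)
        = ((u : A) + a + ((-u : AddUnits A) : A))
          + ((u : A) + b + ((-u : AddUnits A) : A)) := by
    intro a b
    simp [add_assoc, AddUnits.neg_add_cancel_left]
  let f : AddHom A A := ⟨fun s => (u : A) + s + ((-u : AddUnits A) : A), hadd⟩
  have hinj : Function.Injective f := by
    intro a b hab
    have h1 : (u : A) + a = (u : A) + b := by
      have := congrArg (· + (u : A)) hab
      simpa [f, add_assoc, AddUnits.neg_add] using this
    have := congrArg (((-u : AddUnits A) : A) + ·) h1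
    simpa [AddUnits.neg_add_cancel_left] using this
  have hmap : (AddSubsemigroup.closure {(u : A) + t + ((-u : AddUnits A) : A)}
      : AddSubsemigroup A) = (AddSubsemigroup.closure {t}).map f := by
    rw [AddHom.map_mclosure, Set.image_singleton]
    rfl
  unfold ord
  rw [hmap]
  show (f '' (AddSubsemigroup.closure {t} : Set A)).encard = _
  exact hinj.injOn.encard_image

theorem stmt2 {A : Type*} [AddCancelMonoid A] (X Y : Set A)
    (h : ((X ∩ {a | IsAddUnit a}) + (Y ∩ {a | IsAddUnit a})).Nonempty) :
    min (gamma X) (gamma Y) ≤ max (gamma X) (gamma Y) ∧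
    gamma (X + Y) ≤ min (gamma X) (gamma Y) ∧
    pConst A ≤ gamma (X + Y) := by
  -- In a cancellative monoid, x + y = 0 implies y + x = 0.
  have hswap : ∀ x y : A, x + y = 0 → y + x = 0 := by
    intro x y hxy
    have : (y + x) + (y + x) = (y + x) + 0 := by
      calc (y + x) + (y + x) = y + (x + y) + x := by simp [add_assoc]
        _ = y + x := by rw [hxy]; simp
        _ = (y + x) + 0 := by simp
    exact add_left_cancel this
  -- a sum being a unit forces both summands to be units
  have hfac : ∀ x y : A, IsAddUnit (x + y) → IsAddUnit x ∧ IsAddUnit y := by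
    intro x y hxy
    obtain ⟨w, hw⟩ := hxy
    have hx : x + (y + ((-w : AddUnits A) : A)) = 0 := by
      rw [← add_assoc, ← hw]; exact w.add_neg
    have hxu : IsAddUnit x := isAddUnit_iff_exists.2 ⟨_, hx, hswap _ _ hx⟩
    have hy : (((-w : AddUnits A) : A) + x) + y = 0 := by
      rw [add_assoc, ← hw]; exact w.neg_add
    have hyu : IsAddUnit y := isAddUnit_iff_exists.2 ⟨_, hswap _ _ hy, hy⟩
    exact ⟨hxu, hyu⟩
  refine ⟨min_le_max, ?_, ?_⟩
  · -- gamma (X + Y) ≤ min (gamma X) (gamma Y)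
    refine iSup₂_le fun w hw => ?_
    obtain ⟨x₀, hx₀, y₀, hy₀, hxy0⟩ := hw
    have hxy : x₀ + y₀ = (w : A) := hxy0
    have hxu : IsAddUnit x₀ := (hfac x₀ y₀ (by rw [hxy]; exact w.isAddUnit)).1
    obtain ⟨ux, hux⟩ := hxu
    have huy : (w : A) = (ux : A) + (((-ux : AddUnits A) + w : AddUnits A) : A) := by
      simp [AddUnits.add_neg_cancel_left]
    set uy : AddUnits A := (-ux) + w with huy_def
    have huyval : (uy : A) = y₀ := by
      have : (ux : A) + (uy : A) = (ux : A) + y₀ := by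
        rw [← huy, ← hxy, hux]
      have := congrArg (((-ux : AddUnits A) : A) + ·) this
      simpa [AddUnits.neg_add_cancel_left] using this
    have hw_eq : w = ux + uy := by
      simp [huy_def]
    have hnegw : ((-w : AddUnits A) : A) = ((-uy : AddUnits A) : A) + ((-ux : AddUnits A) : A) := by
      rw [hw_eq, neg_add_rev]; rfl
    refine le_min ?_ ?_
    · -- ≤ gamma X
      refine le_trans ?_ (le_iSup₂ (f := fun (u : AddUnits A) (_ : (u : A) ∈ X) =>
        ⨅ (x : A) (_ : x ∈ X ∧ x ≠ (u : A)), ord (x + ((-u : AddUnits A) : A))) ux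
        (by rwa [hux]))
      refine le_iInf₂ fun x hx => ?_
      refine iInf₂_le_of_le (x + y₀) ⟨Set.add_mem_add hx.1 hy₀, ?_⟩ ?_
      · intro hcon
        apply hx.2
        have : x + y₀ = x₀ + y₀ := by rw [hcon, ← hxy]
        have := add_right_cancel this
        rw [this, hux]
      · have : x + y₀ + ((-w : AddUnits A) : A) = x + ((-ux : AddUnits A) : A) := by
          rw [hnegw, ← huyval]
          simp [add_assoc, AddUnits.add_neg_cancel_left]
        rw [this]
    · -- ≤ gamma Y
      have hyX : (uy : A) ∈ Y := by rwa [huyval]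
      refine le_trans ?_ (le_iSup₂ (f := fun (u : AddUnits A) (_ : (u : A) ∈ Y) =>
        ⨅ (x : A) (_ : x ∈ Y ∧ x ≠ (u : A)), ord (x + ((-u : AddUnits A) : A))) uy hyX)
      refine le_iInf₂ fun y hy => ?_
      refine iInf₂_le_of_le (x₀ + y) ⟨Set.add_mem_add hx₀ hy.1, ?_⟩ ?_
      · intro hcon
        apply hy.2
        have : x₀ + y = x₀ + y₀ := by rw [hcon, ← hxy]
        have := add_left_cancel this
        rw [this, huyval]
      · have : x₀ + y + ((-w : AddUnits A) : A)
            = (ux : A) + (y + ((-uy : AddUnits A) : A)) + ((-ux : AddUnits A) : A) := by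
          rw [hnegw, hux]
          simp [add_assoc]
        rw [this, ord_conj]
  · -- pConst A ≤ gamma (X + Y)
    obtain ⟨c, hc⟩ := h
    obtain ⟨x₀, hx₀, y₀, hy₀, -⟩ := hc
    obtain ⟨ux, hux⟩ := hx₀.2
    obtain ⟨uy, huy⟩ := hy₀.2
    have hwmem : ((ux + uy : AddUnits A) : A) ∈ X + Y := by
      rw [AddUnits.val_add, hux, huy]
      exact Set.add_mem_add hx₀.1 hy₀.1
    refine le_trans ?_ (le_iSup₂ (f := fun (u : AddUnits A) (_ : (u : A) ∈ X + Y) =>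
      ⨅ (x : A) (_ : x ∈ X + Y ∧ x ≠ (u : A)), ord (x + ((-u : AddUnits A) : A)))
      (ux + uy) hwmem)
    refine le_iInf₂ fun z hz => iInf₂_le _ ?_
    intro hcon
    apply hz.2
    have h2 := congrArg (· + ((ux + uy : AddUnits A) : A)) hcon
    simpa [add_assoc, AddUnits.neg_add] using h2
end

section
/- Let A be a cancellative monoid and let X, Y be non-empty finite subsets of A such that the elements of Y pairwise commute (equivalently, the subsemigroup generated by Y is commutative). Then |X + Y| ≥ min(γ(Y), |X| + |Y| − 1). -/
/-!
Translating by a unit `u ∈ Y` reduces to the case `0 ∈ Y`, which is proved by strong induction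
on `|Y|` via the Davenport transform. If `x₀ + y ∉ X` for some `x₀ ∈ X` and `y ∈ Y`, replace
`(X, Y)` by `(X ∪ (x₀ + (Y \ Y')), Y')` with `Y' = {y ∈ Y | x₀ + y ∈ X}`: commutativity of `Y`
keeps the sumset inside `X + Y`, `|X| + |Y|` is unchanged and `Y'` is a smaller set still
containing `0`. Otherwise `X + Y ⊆ X`, so `X` is stable under adding any `y ∈ Y`, and a
nonzero such `y` has order at most `|X|`.
-/

open Pointwise

section

variable {A : Type*}

theorem ord_le_encard_of_forall_add_mem [AddLeftCancelSemigroup A] {X : Set A}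
    (hX : X.Nonempty) {y : A} (hy : ∀ x ∈ X, x + y ∈ X) : ord y ≤ X.encard := by
  obtain ⟨x₀, hx₀⟩ := hX
  have hstable : ∀ c ∈ AddSubsemigroup.closure {y}, ∀ x ∈ X, x + c ∈ X := by
    intro c hc
    induction hc using AddSubsemigroup.closure_induction with
    | mem c hc => rwa [Set.mem_singleton_iff.mp hc]
    | add a b _ _ ha hb => exact fun x hx => add_assoc x a b ▸ hb _ (ha x hx)
  rw [ord, ← (add_right_injective x₀).injOn.encard_image]
  exact Set.encard_le_encard (Set.image_subset_iff.mpr fun c hc => hstable c hc x₀ hx₀)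

theorem union_image_add_inter_preimage_subset [AddSemigroup A] (X Y : Set A) (x₀ : A)
    (hcomm : ∀ a ∈ Y, ∀ b ∈ Y, a + b = b + a) :
    (X ∪ (x₀ + ·) '' (Y \ (x₀ + ·) ⁻¹' X)) + (Y ∩ (x₀ + ·) ⁻¹' X) ⊆ X + Y := by
  rintro _ ⟨a, ha, b, ⟨hbY, hbX⟩, rfl⟩
  rcases ha with haX | ⟨y, ⟨hyY, -⟩, rfl⟩
  · exact Set.add_mem_add haX hbY
  · show x₀ + y + b ∈ X + Y
    rw [add_assoc, hcomm y hyY b hbY, ← add_assoc]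
    exact Set.add_mem_add hbX hyY

theorem encard_union_image_add_encard_inter_preimage [AddLeftCancelSemigroup A]
    (X Y : Set A) (x₀ : A) :
    (X ∪ (x₀ + ·) '' (Y \ (x₀ + ·) ⁻¹' X)).encard + (Y ∩ (x₀ + ·) ⁻¹' X).encard =
      X.encard + Y.encard := by
  have hdisj : Disjoint X ((x₀ + ·) '' (Y \ (x₀ + ·) ⁻¹' X)) := by
    rw [Set.disjoint_right]
    rintro _ ⟨y, ⟨-, hy⟩, rfl⟩
    exact hy
  rw [Set.encard_union_eq hdisj, (add_right_injective x₀).injOn.encard_image, add_assoc,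
    Set.encard_sdiff_add_encard_inter]

theorem min_le_encard_add_of_zero_mem [AddLeftCancelMonoid A] {X Y : Set A} (hX : X.Nonempty)
    (hY : Y.Finite) (h0 : (0 : A) ∈ Y) (hcomm : ∀ a ∈ Y, ∀ b ∈ Y, a + b = b + a) {c : ℕ∞}
    (hc : ∀ y ∈ Y, y ≠ 0 → c ≤ ord y) :
    min c (X.encard + Y.encard - 1) ≤ (X + Y).encard := by
  induction hn : Y.ncard using Nat.strong_induction_on generalizing X Y with
  | _ n ih =>
  by_cases hsub : ∀ x ∈ X, ∀ y ∈ Y, x + y ∈ X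
  · have hXle : X.encard ≤ (X + Y).encard :=
      Set.encard_le_encard fun x hx => by simpa using Set.add_mem_add hx h0
    rcases Set.eq_singleton_or_nontrivial h0 with rfl | hnt
    · rw [Set.encard_singleton,
        (ENat.addLECancellable_of_ne_top ENat.one_ne_top).add_tsub_cancel_right]
      exact (min_le_right _ _).trans hXle
    · obtain ⟨y, hy, hy0⟩ := hnt.exists_ne 0
      calc min c (X.encard + Y.encard - 1) ≤ ord y := (min_le_left _ _).trans (hc y hy hy0)
        _ ≤ X.encard := ord_le_encard_of_forall_add_mem hX fun x hx => hsub x hx y hy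
        _ ≤ (X + Y).encard := hXle
  · push Not at hsub
    obtain ⟨x₀, hx₀, y₁, hy₁, hout⟩ := hsub
    have hsubY : Y ∩ (x₀ + ·) ⁻¹' X ⊆ Y := Set.inter_subset_left
    have hlt : (Y ∩ (x₀ + ·) ⁻¹' X).ncard < n :=
      hn ▸ Set.ncard_lt_ncard ⟨hsubY, fun h => hout (h hy₁).2⟩ hY
    calc min c (X.encard + Y.encard - 1)
        = min c ((X ∪ (x₀ + ·) '' (Y \ (x₀ + ·) ⁻¹' X)).encard
            + (Y ∩ (x₀ + ·) ⁻¹' X).encard - 1) := by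
          rw [encard_union_image_add_encard_inter_preimage]
      _ ≤ ((X ∪ (x₀ + ·) '' (Y \ (x₀ + ·) ⁻¹' X)) + (Y ∩ (x₀ + ·) ⁻¹' X)).encard :=
          ih _ hlt (hX.mono Set.subset_union_left) (hY.subset hsubY)
            ⟨h0, by simpa using hx₀⟩ (fun a ha b hb => hcomm a (hsubY ha) b (hsubY hb))
            (fun y hy => hc y (hsubY hy)) rfl
      _ ≤ (X + Y).encard :=
          Set.encard_le_encard (union_image_add_inter_preimage_subset X Y x₀ hcomm)

theorem min_le_encard_add_of_addUnit_mem [AddLeftCancelMonoid A] {X Y : Set A}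
    (hX : X.Nonempty) (hY : Y.Finite) (hcomm : ∀ a ∈ Y, ∀ b ∈ Y, a + b = b + a)
    {u : AddUnits A} (hu : (u : A) ∈ Y) {c : ℕ∞}
    (hc : ∀ y ∈ Y, y ≠ u → c ≤ ord (y + ((-u : AddUnits A) : A))) :
    min c (X.encard + Y.encard - 1) ≤ (X + Y).encard := by
  have hneg : ∀ y ∈ Y, AddCommute ((-u : AddUnits A) : A) y :=
    fun y hy => AddCommute.addUnits_neg_left (hcomm _ hu y hy)
  have hsum : X + {(u : A)} + ({((-u : AddUnits A) : A)} + Y) = X + Y := by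
    rw [add_assoc, ← add_assoc {(u : A)}, Set.singleton_add_singleton, AddUnits.add_neg,
      Set.singleton_zero, zero_add]
  have hX' : (X + {(u : A)}).encard = X.encard := by
    rw [Set.add_singleton, u.isAddUnit.add_left_injective.injOn.encard_image]
  have hY' : ({((-u : AddUnits A) : A)} + Y).encard = Y.encard := by
    rw [Set.singleton_add, (add_right_injective _).injOn.encard_image]
  rw [← hsum, ← hX', ← hY']
  refine min_le_encard_add_of_zero_mem (hX.add (Set.singleton_nonempty _))
    ((Set.finite_singleton _).add hY) ⟨_, rfl, u, hu, AddUnits.neg_add u⟩ ?_ ?_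
  · rintro _ ⟨_, rfl, a, ha, rfl⟩ _ ⟨_, rfl, b, hb, rfl⟩
    exact (((AddCommute.refl _).add_right (hneg b hb)).add_left
      ((hneg a ha).symm.add_right (hcomm a ha b hb))).eq
  · rintro _ ⟨_, rfl, y, hy, rfl⟩ hy0
    beta_reduce at hy0 ⊢
    rw [(hneg y hy).eq]
    exact hc y hy fun hyu => hy0 (hyu ▸ AddUnits.neg_add u)

end

theorem stmt4_general {A : Type*} [AddCancelMonoid A] (X Y : Set A)
    (hX : X.Nonempty) (hYf : Y.Finite)
    (hcomm : ∀ a ∈ Y, ∀ b ∈ Y, a + b = b + a) :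
    min (gamma Y) (X.encard + Y.encard - 1) ≤ (X + Y).encard := by
  refine (iSup₂_inf_eq _).trans_le (iSup₂_le fun u hu => ?_)
  exact min_le_encard_add_of_addUnit_mem hX hYf hcomm hu fun y hy hyu => iInf₂_le y ⟨hy, hyu⟩

theorem stmt4 {A : Type*} [AddCancelMonoid A] (X Y : Set A)
    (hX : X.Nonempty) (hY : Y.Nonempty) (hXf : X.Finite) (hYf : Y.Finite)
    (hcomm : ∀ a ∈ Y, ∀ b ∈ Y, a + b = b + a) :
    min (gamma Y) (X.encard + Y.encard - 1) ≤ (X + Y).encard :=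
  stmt4_general X Y hX hYf hcomm
end

section
/- (Hamidoune–Károlyi theorem.) Let G be a group (possibly noncommutative and infinite) and let X, Y be non-empty subsets of G. Then |X + Y| ≥ min(p(G), |X| + |Y| − 1), where p(G) := inf{ord(g) : g ∈ G, g ≠ 0}. -/
open Pointwise

/-- The order of `g`: the cardinality (in `ℕ∞`) of the cyclic subgroup generated by `g`. -/
noncomputable def ordG {G : Type*} [AddGroup G] (g : G) : ℕ∞ :=
  ((AddSubgroup.zmultiples g : AddSubgroup G) : Set G).encard

/-- `p(G) = inf {ord g : g ∈ G, g ≠ 0}`. -/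
noncomputable def pG (G : Type*) [AddGroup G] : ℕ∞ :=
  ⨅ (g : G) (_ : g ≠ 0), ordG g

lemma ordG_eq_of_finOrder {G : Type*} [AddGroup G] {g : G} (hg : IsOfFinAddOrder g) :
    ordG g = (addOrderOf g : ℕ∞) := by
  have hfin := hg.finite_zmultiples
  rw [ordG, hfin.encard_eq_coe_toFinset_card, ← Set.ncard_eq_toFinset_card _ hfin,
    ← Nat.card_coe_set_eq, SetLike.coe_sort_coe, Nat.card_zmultiples]

lemma ordG_eq_top {G : Type*} [AddGroup G] {g : G} (hg : ¬ IsOfFinAddOrder g) :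
    ordG g = ⊤ := by
  rw [ordG, Set.encard_eq_top_iff]
  exact infinite_zmultiples.2 hg

lemma pG_eq_minOrder (G : Type*) [AddGroup G] : pG G = AddMonoid.minOrder G := by
  apply le_antisymm
  · rw [AddMonoid.minOrder]
    refine le_iInf fun a => le_iInf fun ha => le_iInf fun ha' => ?_
    refine (iInf_le _ a).trans ((iInf_le _ ha).trans ?_)
    rw [ordG_eq_of_finOrder ha']
  · refine le_iInf fun g => le_iInf fun hg => ?_
    by_cases h : IsOfFinAddOrder g
    · rw [ordG_eq_of_finOrder h]
      exact AddMonoid.minOrder_le_addOrderOf hg h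
    · rw [ordG_eq_top h]; exact le_top

theorem stmt6 {G : Type*} [AddGroup G] (X Y : Set G)
    (hX : X.Nonempty) (hY : Y.Nonempty) :
    min (pG G) (X.encard + Y.encard - 1) ≤ (X + Y).encard := by
  obtain ⟨y, hy⟩ := hY
  obtain ⟨x, hx⟩ := hX
  by_cases hXf : X.Finite
  · by_cases hYf : Y.Finite
    · classical
      have hs : hXf.toFinset.Nonempty := by simpa using ⟨x, hx⟩
      have ht : hYf.toFinset.Nonempty := by simpa using ⟨y, hy⟩
      have key := cauchy_davenport_minOrder_add hs ht
      have hcoe : ((hXf.toFinset + hYf.toFinset : Finset G) : Set G) = X + Y := by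
        rw [Finset.coe_add, Set.Finite.coe_toFinset, Set.Finite.coe_toFinset]
      have hXY : (X + Y).encard = ((hXf.toFinset + hYf.toFinset).card : ℕ∞) := by
        rw [← hcoe, Set.encard_coe_eq_coe_finsetCard]
      rw [hXY, pG_eq_minOrder,
        Set.Finite.encard_eq_coe_toFinset_card hXf,
        Set.Finite.encard_eq_coe_toFinset_card hYf]
      have h1 : (1 : ℕ) ≤ hXf.toFinset.card + hYf.toFinset.card :=
        le_add_right hs.card_pos
      calc min (AddMonoid.minOrder G)
            ((hXf.toFinset.card : ℕ∞) + hYf.toFinset.card - 1)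
          = min (AddMonoid.minOrder G)
            ((hXf.toFinset.card + hYf.toFinset.card - 1 : ℕ) : ℕ∞) := by
            norm_cast
        _ ≤ _ := key
    · have : (X + Y).Infinite := by
        have h1 : ({x} : Set G) + Y ⊆ X + Y := Set.add_subset_add_right (by simpa)
        refine Set.Infinite.mono h1 ?_
        rw [Set.singleton_add]
        exact Set.Infinite.image (fun a _ b _ h => by simpa using h) hYf
      rw [this.encard_eq]
      exact le_top
  · have : (X + Y).Infinite := by
      have h1 : X + ({y} : Set G) ⊆ X + Y := Set.add_subset_add_left (by simpa)
      refine Set.Infinite.mono h1 ?_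
      rw [Set.add_singleton]
      exact Set.Infinite.image (fun a _ b _ h => by simpa using h) hXf
    rw [this.encard_eq]
    exact le_top
end

section
/- Let A be a cancellative monoid, let n ≥ 1, and let X₁, …, Xₙ be subsets of A such that X₁^× + ⋯ + Xₙ^× is non-empty. Then |X₁ + ⋯ + Xₙ| ≥ min(p(A), |X₁| + ⋯ + |Xₙ| + 1 − n). -/
open Pointwise

theorem ENat.min_add_tsub_le_min_add_min_tsub {p a b c : ℕ∞} (ha : 1 ≤ a) :
    min p (a + b - (c + 1)) ≤ min p (a + min p (b - c) - 1) := by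
  rcases le_total p (b - c) with h | h
  · rw [min_eq_left h]
    exact (min_le_left _ _).trans (le_min le_rfl (ENat.le_sub_of_add_le_left ENat.one_ne_top
      (by gcongr)))
  · rw [min_eq_right h, ← tsub_tsub]
    gcongr
    exact add_tsub_le_assoc

namespace Set

variable {α : Type*}

theorem ncard_sep_add_ncard_sep_not {X : Set α} (p : α → Prop) (hX : X.Finite) :
    {x ∈ X | p x}.ncard + {x ∈ X | ¬p x}.ncard = X.ncard :=
  ncard_inter_add_ncard_sdiff_eq_ncard X {x | p x} hX

theorem ncard_union_image_of_injective {X : Set α} {f : α → α} (hf : f.Injective)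
    (hX : X.Finite) : (X ∪ f '' X).ncard = X.ncard + {x ∈ X | f x ∉ X}.ncard := by
  have himage : f '' X \ X = f '' {x ∈ X | f x ∉ X} := by
    ext; simp only [mem_sdiff, mem_image, mem_sep_iff]; grind
  rw [← union_sdiff_self, ncard_union_eq disjoint_sdiff_right hX (hX.image f).sdiff, himage,
    ncard_image_of_injective _ hf]

theorem encard_singleton_add [Add α] [IsLeftCancelAdd α] (a : α) (S : Set α) :
    ({a} + S).encard = S.encard := by
  rw [singleton_add, (add_right_injective a).encard_image]

theorem encard_add_singleton [Add α] [IsRightCancelAdd α] (S : Set α) (b : α) :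
    (S + {b}).encard = S.encard := by
  rw [add_singleton, (add_left_injective b).encard_image]

theorem nonempty_of_mem_of_list_sum_nonempty [AddMonoid α] {L : List (Set α)} {S : Set α}
    (hS : S ∈ L) (h : L.sum.Nonempty) : S.Nonempty := by
  induction L with
  | nil => simp at hS
  | cons T L ih =>
    rw [List.sum_cons] at h
    rcases List.mem_cons.1 hS with rfl | hS
    · exact h.of_add_left
    · exact ih hS h.of_add_right

theorem exists_isAddUnit_mem_list_sum [AddMonoid α] {L : List (Set α)}
    (hL : ∀ S ∈ L, ∃ u ∈ S, IsAddUnit u) : ∃ u ∈ L.sum, IsAddUnit u := by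
  induction L with
  | nil => exact ⟨0, by simp, isAddUnit_zero⟩
  | cons T L ih =>
    obtain ⟨u, hu, hu'⟩ := hL T List.mem_cons_self
    obtain ⟨v, hv, hv'⟩ := ih fun S hS => hL S (List.mem_cons_of_mem _ hS)
    exact ⟨u + v, add_mem_add hu hv, hu'.add hv'⟩

end Set

section AddMonoid

variable {A : Type*} [AddMonoid A] {X : Set A} {z : A}

theorem pConst_le_encard_of_closure_subset (hz : z ≠ 0)
    (hX : (AddSubsemigroup.closure {z} : Set A) ⊆ X) : pConst A ≤ X.encard :=
  (iInf₂_le z hz).trans (Set.encard_le_encard hX)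

theorem closure_singleton_subset_of_add_right_mem (h0 : 0 ∈ X) (hX : ∀ x ∈ X, x + z ∈ X) :
    (AddSubsemigroup.closure {z} : Set A) ⊆ X := by
  let S : AddSubsemigroup A :=
    { carrier := {s | ∀ x ∈ X, x + s ∈ X}
      add_mem' := fun hs ht x hx => add_assoc x _ _ ▸ ht _ (hs x hx) }
  intro s hs
  simpa using ((AddSubsemigroup.closure_singleton_le_iff_mem z S).2 hX hs) 0 h0

theorem closure_singleton_subset_of_add_left_mem (h0 : 0 ∈ X) (hX : ∀ x ∈ X, z + x ∈ X) :
    (AddSubsemigroup.closure {z} : Set A) ⊆ X := by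
  let S : AddSubsemigroup A :=
    { carrier := {s | ∀ x ∈ X, s + x ∈ X}
      add_mem' := fun hs ht x hx => (add_assoc _ _ x).symm ▸ hs _ (ht x hx) }
  intro s hs
  simpa using ((AddSubsemigroup.closure_singleton_le_iff_mem z S).2 hX hs) 0 h0

end AddMonoid

section AddCancelMonoid

variable {A : Type*} [AddCancelMonoid A] {X Y : Set A} {z : A}

theorem exists_eTransform (hX : X.Finite) (hY : Y.Finite) (h0X : 0 ∈ X) (h0Y : 0 ∈ Y)
    (hzX : z ∈ X) (hzY : z ∈ Y) (hXz : ∃ x ∈ X, x + z ∉ X)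
    (hYz : ∃ y ∈ Y, z + y ∉ Y) :
    ∃ X' Y' : Set A, 0 ∈ X' ∧ 0 ∈ Y' ∧ X' + Y' ⊆ X + Y ∧
      (X.ncard + Y.ncard < X'.ncard + Y'.ncard ∨
        X.ncard + Y.ncard ≤ X'.ncard + Y'.ncard ∧ Y'.ncard < Y.ncard) := by
  have ha : 0 < {x ∈ X | x + z ∉ X}.ncard :=
    (Set.ncard_pos (hX.subset (Set.sep_subset _ _))).2 hXz
  have hb : 0 < {y ∈ Y | z + y ∉ Y}.ncard :=
    (Set.ncard_pos (hY.subset (Set.sep_subset _ _))).2 hYz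
  have hXa := Set.ncard_sep_add_ncard_sep_not (· + z ∈ X) hX
  have hYb := Set.ncard_sep_add_ncard_sep_not (z + · ∈ Y) hY
  rcases le_or_gt {y ∈ Y | z + y ∉ Y}.ncard {x ∈ X | x + z ∉ X}.ncard with hba | hab
  · refine ⟨X ∪ (· + z) '' X, {y ∈ Y | z + y ∈ Y}, .inl h0X, ⟨h0Y, by simpa⟩, ?_, .inr ?_⟩
    · rintro _ ⟨_, hx | ⟨x, hx, rfl⟩, y, hy, rfl⟩
      · exact Set.add_mem_add hx hy.1
      · simpa only [add_assoc] using Set.add_mem_add hx hy.2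
    · rw [Set.ncard_union_image_of_injective (add_left_injective z) hX]; omega
  · refine ⟨{x ∈ X | x + z ∈ X}, Y ∪ (z + ·) '' Y, ⟨h0X, by simpa⟩, .inl h0Y, ?_, .inl ?_⟩
    · rintro _ ⟨x, hx, _, hy | ⟨y, hy, rfl⟩, rfl⟩
      · exact Set.add_mem_add hx.1 hy
      · simpa only [add_assoc] using Set.add_mem_add hx.2 hy
    · rw [Set.ncard_union_image_of_injective (add_right_injective z) hY]; omega

theorem pConst_le_encard_add_or_ncard_add_ncard_le (X Y : Set A) (hfin : (X + Y).Finite)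
    (h0X : 0 ∈ X) (h0Y : 0 ∈ Y) :
    pConst A ≤ (X + Y).encard ∨ X.ncard + Y.ncard ≤ (X + Y).ncard + 1 := by
  have hXsub := Set.subset_add_left X h0Y
  have hYsub := Set.subset_add_right Y h0X
  have hX := hfin.subset hXsub
  have hY := hfin.subset hYsub
  by_cases hXY : X ∩ Y ⊆ {0}
  · have := Set.ncard_union_add_ncard_inter X Y hX hY
    have := Set.ncard_le_ncard (Set.union_subset hXsub hYsub) hfin
    have := (Set.ncard_le_ncard hXY).trans_eq (Set.ncard_singleton (0 : A))
    right; omega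
  obtain ⟨z, ⟨hzX, hzY⟩, hz⟩ := Set.not_subset.1 hXY
  by_cases hXz : ∀ x ∈ X, x + z ∈ X
  · exact .inl <| (pConst_le_encard_of_closure_subset hz
      (closure_singleton_subset_of_add_right_mem h0X hXz)).trans (Set.encard_le_encard hXsub)
  by_cases hYz : ∀ y ∈ Y, z + y ∈ Y
  · exact .inl <| (pConst_le_encard_of_closure_subset hz
      (closure_singleton_subset_of_add_left_mem h0Y hYz)).trans (Set.encard_le_encard hYsub)
  push Not at hXz hYz
  obtain ⟨X', Y', h0X', h0Y', hsub, hcard⟩ := exists_eTransform hX hY h0X h0Y hzX hzY hXz hYz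
  have hfin' := hfin.subset hsub
  have hle : (X' + Y').ncard ≤ (X + Y).ncard := Set.ncard_le_ncard hsub hfin
  have hX'le := Set.ncard_le_ncard (Set.subset_add_left X' h0Y') hfin'
  have hY'le := Set.ncard_le_ncard (Set.subset_add_right Y' h0X') hfin'
  rcases pConst_le_encard_add_or_ncard_add_ncard_le X' Y' hfin' h0X' h0Y' with h | h
  · exact .inl (h.trans (Set.encard_le_encard hsub))
  · right; omega
termination_by (2 * (X + Y).ncard - X.ncard - Y.ncard, Y.ncard)
decreasing_by rw [Prod.lex_def]; omega

theorem min_pConst_le_encard_add_of_zero_mem (h0X : 0 ∈ X) (h0Y : 0 ∈ Y) :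
    min (pConst A) (X.encard + Y.encard - 1) ≤ (X + Y).encard := by
  rcases (X + Y).finite_or_infinite with hfin | hinf
  · have hX := hfin.subset (Set.subset_add_left X h0Y)
    have hY := hfin.subset (Set.subset_add_right Y h0X)
    rcases pConst_le_encard_add_or_ncard_add_ncard_le X Y hfin h0X h0Y with h | h
    · exact min_le_of_left_le h
    · refine min_le_of_right_le ?_
      rw [← hX.cast_ncard_eq, ← hY.cast_ncard_eq, ← hfin.cast_ncard_eq]
      exact_mod_cast (by omega : X.ncard + Y.ncard - 1 ≤ (X + Y).ncard)
  · simp [hinf.encard_eq]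

theorem min_pConst_le_encard_add (hX : ∃ u ∈ X, IsAddUnit u) (hY : ∃ v ∈ Y, IsAddUnit v) :
    min (pConst A) (X.encard + Y.encard - 1) ≤ (X + Y).encard := by
  obtain ⟨_, hu, u, rfl⟩ := hX
  obtain ⟨_, hv, v, rfl⟩ := hY
  set a : A := ↑(-u)
  set b : A := ↑(-v)
  have key := min_pConst_le_encard_add_of_zero_mem (X := {a} + X) (Y := Y + {b})
    (u.neg_add ▸ Set.add_mem_add (Set.mem_singleton a) hu)
    (v.add_neg ▸ Set.add_mem_add hv (Set.mem_singleton b))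
  rwa [Set.encard_singleton_add, Set.encard_add_singleton,
    show {a} + X + (Y + {b}) = {a} + (X + Y) + {b} by simp only [add_assoc],
    Set.encard_add_singleton, Set.encard_singleton_add] at key

theorem min_pConst_le_encard_list_sum (L : List (Set A))
    (hL : ∀ S ∈ L, ∃ u ∈ S, IsAddUnit u) :
    min (pConst A) ((L.map Set.encard).sum + 1 - L.length) ≤ L.sum.encard := by
  induction L with
  | nil => simp
  | cons T L ih =>
    obtain ⟨u, hu, hu'⟩ := hL T List.mem_cons_self
    have hL' := fun S hS => hL S (List.mem_cons_of_mem T hS)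
    simp only [List.map_cons, List.sum_cons, List.length_cons, Nat.cast_succ, add_assoc]
    calc _ ≤ min (pConst A)
          (T.encard + min (pConst A) ((L.map Set.encard).sum + 1 - L.length) - 1) :=
          ENat.min_add_tsub_le_min_add_min_tsub (Set.one_le_encard_iff_nonempty.2 ⟨u, hu⟩)
      _ ≤ min (pConst A) (T.encard + L.sum.encard - 1) := by gcongr; exact ih hL'
      _ ≤ (T + L.sum).encard :=
          min_pConst_le_encard_add ⟨u, hu, hu'⟩ (Set.exists_isAddUnit_mem_list_sum hL')

end AddCancelMonoid

theorem stmt7_general {A : Type*} [AddCancelMonoid A] (n : ℕ)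
    (X : Fin n → Set A)
    (h : ((List.ofFn fun i => X i ∩ {a | IsAddUnit a}).sum).Nonempty) :
    min (pConst A) ((∑ i, (X i).encard) + 1 - n) ≤ ((List.ofFn X).sum).encard := by
  have hunits : ∀ S ∈ List.ofFn X, ∃ u ∈ S, IsAddUnit u := by
    rintro _ hS
    obtain ⟨i, rfl⟩ := List.mem_ofFn.1 hS
    exact Set.nonempty_of_mem_of_list_sum_nonempty (List.mem_ofFn.2 ⟨i, rfl⟩) h
  simpa [List.sum_ofFn] using min_pConst_le_encard_list_sum (List.ofFn X) hunits

theorem stmt7 {A : Type*} [AddCancelMonoid A] (n : ℕ) (hn : 1 ≤ n)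
    (X : Fin n → Set A)
    (h : ((List.ofFn fun i => X i ∩ {a | IsAddUnit a}).sum).Nonempty) :
    min (pConst A) ((∑ i, (X i).encard) + 1 - n) ≤ ((List.ofFn X).sum).encard :=
  stmt7_general n X h
end

section
/- (Kemperman's inequality.) Let G be a group and let X, Y be non-empty subsets of G. Suppose that every element g of G with g ≠ 0 satisfies ord(g) ≥ |X| + |Y| − 1 (in ℕ∞). Then |X + Y| ≥ |X| + |Y| − 1. -/
open Pointwise

theorem stmt8 {G : Type*} [AddGroup G] (X Y : Set G)
    (hX : X.Nonempty) (hY : Y.Nonempty)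
    (h : ∀ g : G, g ≠ 0 → X.encard + Y.encard - 1 ≤ ordG g) :
    X.encard + Y.encard - 1 ≤ (X + Y).encard := by
  classical
  -- infinite cases
  rcases X.finite_or_infinite with hXf | hXf
  swap
  · obtain ⟨y, hy⟩ := hY
    have : X + Y |>.Infinite := by
      have : (fun x => x + y) '' X ⊆ X + Y := by
        rintro _ ⟨x, hx, rfl⟩; exact Set.add_mem_add hx hy
      exact Set.Infinite.mono this (hXf.image (add_left_injective y).injOn)
    simp [this.encard_eq]
  rcases Y.finite_or_infinite with hYf | hYf
  swap
  · obtain ⟨x, hx⟩ := hX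
    have : X + Y |>.Infinite := by
      have : (fun y => x + y) '' Y ⊆ X + Y := by
        rintro _ ⟨z, hz, rfl⟩; exact Set.add_mem_add hx hz
      exact Set.Infinite.mono this (hYf.image (add_right_injective x).injOn)
    simp [this.encard_eq]
  -- finite case
  set s := hXf.toFinset with hs
  set t := hYf.toFinset with ht
  have hsne : s.Nonempty := by simp [hs, hX]
  have htne : t.Nonempty := by simp [ht, hY]
  have hXe : X.encard = (s.card : ℕ∞) := by
    rw [hXf.encard_eq_coe_toFinset_card]
  have hYe : Y.encard = (t.card : ℕ∞) := by
    rw [hYf.encard_eq_coe_toFinset_card]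
  have hXYe : (X + Y).encard = ((s + t).card : ℕ∞) := by
    have : X + Y = ((s + t : Finset G) : Set G) := by
      push_cast [hs, ht]; simp
    rw [this, Set.encard_coe_eq_coe_finsetCard]
  have key := cauchy_davenport_minOrder_add (α := G) hsne htne
  rw [hXe, hYe, hXYe]
  have hcast : ((s.card + t.card - 1 : ℕ) : ℕ∞) = (s.card : ℕ∞) + t.card - 1 := by
    have h1 : 1 ≤ s.card + t.card := le_add_of_le_of_nonneg hsne.card_pos (Nat.zero_le _)
    push_cast [Nat.cast_sub h1]
    rfl
  have hmin : ((s.card : ℕ∞) + t.card - 1) ≤ AddMonoid.minOrder G := by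
    rw [AddMonoid.le_minOrder]
    intro g hg hg'
    have hfin : Finite (AddSubgroup.zmultiples g) := hg'.finite_zmultiples.to_subtype
    have hord : ordG g = (addOrderOf g : ℕ∞) := by
      rw [ordG, Set.encard, ← Nat.card_zmultiples g, ENat.card_eq_coe_natCard]
      simp [SetLike.coe_sort_coe]
    have := h g hg
    rwa [hXe, hYe, hord] at this
  calc (s.card : ℕ∞) + t.card - 1
      = min (AddMonoid.minOrder G) ((s.card + t.card - 1 : ℕ) : ℕ∞) := by
        rw [hcast, min_eq_right hmin]
    _ ≤ ((s + t).card : ℕ∞) := key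
end

section
/- Let A be a semigroup and let x, y ∈ A, with at least one of x or y cancellable. Then ord(x + y) = ord(y + x). -/
/-- `apow z n = (n+1)-fold sum of z`. -/
def apow {A : Type*} [AddSemigroup A] (z : A) : ℕ → A
  | 0 => z
  | n + 1 => apow z n + z

lemma apow_add {A : Type*} [AddSemigroup A] (z : A) (m n : ℕ) :
    apow z m + apow z n = apow z (m + n + 1) := by
  induction n with
  | zero => rfl
  | succ n ih =>
    show apow z m + (apow z n + z) = _
    rw [← add_assoc, ih]
    rfl

lemma closure_eq_range {A : Type*} [AddSemigroup A] (z : A) :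
    ((AddSubsemigroup.closure {z} : AddSubsemigroup A) : Set A) = Set.range (apow z) := by
  apply le_antisymm
  · have : Set.range (apow z) ∈ {S : Set A | z ∈ S ∧ ∀ a b, a ∈ S → b ∈ S → a + b ∈ S} := by
      constructor
      · exact ⟨0, rfl⟩
      · rintro a b ⟨m, rfl⟩ ⟨n, rfl⟩
        exact ⟨m + n + 1, (apow_add z m n).symm⟩
    intro a ha
    have : a ∈ (⟨Set.range (apow z), fun {p q} hp hq => this.2 p q hp hq⟩ :
        AddSubsemigroup A) := by
      refine AddSubsemigroup.closure_le.mpr ?_ ha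
      intro b hb
      rcases hb with rfl
      exact ⟨0, rfl⟩
    exact this
  · rintro a ⟨n, rfl⟩
    induction n with
    | zero => exact AddSubsemigroup.subset_closure rfl
    | succ n ih =>
      exact AddSubsemigroup.add_mem _ ih (AddSubsemigroup.subset_closure rfl)

lemma range_encard_eq {α β γ : Type*} (f : α → β) (g : α → γ)
    (h : ∀ a b, f a = f b ↔ g a = g b) :
    (Set.range f).encard = (Set.range g).encard := by
  classical
  have F : ∀ a : Set.range f, ∃ n, f n = (a : β) := fun a => a.2
  refine Set.encard_congr ?_
  refine Equiv.ofBijective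
    (fun a => ⟨g (F a).choose, Set.mem_range_self _⟩) ⟨?_, ?_⟩
  · intro a b hab
    have : g (F a).choose = g (F b).choose := Subtype.ext_iff.mp hab
    have : f (F a).choose = f (F b).choose := (h _ _).mpr this
    exact Subtype.ext ((F a).choose_spec ▸ (F b).choose_spec ▸ this)
  · rintro ⟨b, n, rfl⟩
    refine ⟨⟨f n, Set.mem_range_self _⟩, ?_⟩
    have hfn : f (F ⟨f n, Set.mem_range_self n⟩).choose = f n :=
      (F ⟨f n, Set.mem_range_self n⟩).choose_spec
    exact Subtype.ext ((h _ _).mp hfn)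

lemma swap_apow {A : Type*} [AddSemigroup A] (a b : A) (n : ℕ) :
    a + apow (b + a) n = apow (a + b) n + a := by
  induction n with
  | zero => exact (add_assoc a b a).symm
  | succ n ih =>
    show a + (apow (b + a) n + (b + a)) = (apow (a + b) n + (a + b)) + a
    rw [← add_assoc, ih]
    simp only [add_assoc]

lemma ord_key {A : Type*} [AddSemigroup A] (a b : A)
    (ha : ∀ u v : A, (u + a = v + a → u = v) ∧ (a + u = a + v → u = v)) :
    ord (a + b) = ord (b + a) := by
  unfold ord
  rw [closure_eq_range, closure_eq_range]
  apply range_encard_eq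
  intro m n
  constructor
  · intro hmn
    apply (ha _ _).2
    rw [swap_apow, swap_apow, hmn]
  · intro hmn
    apply (ha _ _).1
    rw [← swap_apow, ← swap_apow, hmn]

theorem stmt12 {A : Type*} [AddSemigroup A] (x y : A)
    (h : (∀ u v : A, (u + x = v + x → u = v) ∧ (x + u = x + v → u = v)) ∨
         (∀ u v : A, (u + y = v + y → u = v) ∧ (y + u = y + v → u = v))) :
    ord (x + y) = ord (y + x) := by
  rcases h with hx | hy
  · exact ord_key x y hx
  · exact (ord_key y x hy).symm
end

section
/- Let A be a monoid and let A^op be its opposite monoid (same carrier, with operation x +_op y := y + x). Then for every subset X of A, γ_A(X) = γ_{A^op}(X), i.e., the Cauchy–Davenport constant of X computed in A equals the Cauchy–Davenport constant of (the image of) X computed in A^op. -/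
open Pointwise

/-!
Units of `A` and of `Aᵃᵒᵖ` correspond through `op`, and `ord` is invariant under `op` since the
subsemigroup generated by `op z` is the opposite of the one generated by `z`. In `Aᵃᵒᵖ` the element
`x + (-x₀)` becomes `(-x₀) + x`, which is conjugate to `x + (-x₀)` by the unit `x₀`; conjugation by
a unit is an automorphism, so it preserves `ord` as well.
-/

lemma ord_map_of_injective {A B : Type*} [AddSemigroup A] [AddSemigroup B] (f : A →ₙ+ B)
    (hf : Function.Injective f) (z : A) : ord (f z) = ord z := by
  rw [ord, ← Set.image_singleton, ← AddHom.map_mclosure, AddSubsemigroup.coe_map,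
    hf.encard_image, ord]

lemma ord_op {A : Type*} [AddSemigroup A] (z : A) : ord (AddOpposite.op z) = ord z := by
  have hz : AddOpposite.unop ⁻¹' {z} = {AddOpposite.op z} :=
    Set.ext fun _ => AddOpposite.unop_injective.eq_iff' rfl
  rw [ord, ← hz, ← AddSubsemigroup.op_closure, AddSubsemigroup.coe_op,
    Set.encard_preimage_of_bijective AddOpposite.unop_bijective, ord]

def AddUnits.conj {A : Type*} [AddMonoid A] (u : AddUnits A) : A ≃+ A where
  toFun w := u + w + ↑(-u)
  invFun w := ↑(-u) + w + u
  left_inv w := by simp [add_assoc]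
  right_inv w := by simp [add_assoc]
  map_add' a b := by simp [add_assoc]

lemma ord_neg_add_comm {A : Type*} [AddMonoid A] (u : AddUnits A) (x : A) :
    ord (↑(-u) + x) = ord (x + ↑(-u)) := by
  rw [← ord_map_of_injective (AddUnits.conj u).toAddHom (AddUnits.conj u).injective]
  simp [AddUnits.conj, ← add_assoc]

def AddUnits.equivOp {A : Type*} [AddMonoid A] : AddUnits A ≃ AddUnits Aᵃᵒᵖ :=
  AddOpposite.opEquiv.trans AddUnits.opEquiv.symm.toEquiv

theorem stmt13 {A : Type*} [AddMonoid A] (X : Set A) :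
    gamma X = gamma (AddOpposite.op '' X) := by
  unfold gamma
  refine AddUnits.equivOp.iSup_congr fun u => ?_
  have hu : ((AddUnits.equivOp u : AddUnits Aᵃᵒᵖ) : Aᵃᵒᵖ) = AddOpposite.op (u : A) := rfl
  simp only [hu, AddOpposite.op_injective.mem_set_image]
  refine iSup_congr fun _ => ?_
  rw [← AddOpposite.op_surjective.iInf_comp]
  refine iInf_congr fun x => ?_
  have hx : AddOpposite.op x + ↑(-AddUnits.equivOp u) = AddOpposite.op (↑(-u) + x) := rfl
  simp only [AddOpposite.op_injective.mem_set_image, AddOpposite.op_injective.ne_iff, hx, ord_op,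
    ord_neg_add_comm]
end

section
/- Let A be a monoid, let z be a unit of A, and let X be a subset of A. Then γ(X) ≤ γ(X + z), where X + z := {x + z : x ∈ X}. -/
open Pointwise

theorem stmt15 {A : Type*} [AddMonoid A] (z : A) (hz : IsAddUnit z) (X : Set A) :
    gamma X ≤ gamma (X + {z}) := by
  obtain ⟨w, rfl⟩ := hz
  refine iSup₂_le fun u hu => ?_
  have hmem : ((u + w : AddUnits A) : A) ∈ X + {(w : A)} :=
    Set.add_mem_add hu rfl
  refine le_trans ?_ (le_iSup₂ (f := fun (v : AddUnits A) (_ : (v : A) ∈ X + {(w : A)}) =>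
    ⨅ (x : A) (_ : x ∈ X + {(w : A)} ∧ x ≠ (v : A)), ord (x + ((-v : AddUnits A) : A)))
    (u + w) hmem)
  refine le_iInf₂ fun y hy => ?_
  obtain ⟨⟨x, hx, zz, hzz, rfl⟩, hne⟩ := hy
  rw [Set.mem_singleton_iff] at hzz
  subst hzz
  have hxne : x ≠ (u : A) := by
    rintro rfl
    exact hne rfl
  refine le_trans (iInf₂_le x ⟨hx, hxne⟩) ?_
  have : x + (w : A) + ((-(u + w) : AddUnits A) : A) = x + ((-u : AddUnits A) : A) := by
    rw [neg_add_rev]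
    push_cast
    rw [add_assoc, ← add_assoc (w : A), AddUnits.add_neg, zero_add]
  rw [this]
end

section
/- Let A be a cancellative monoid and let Z be a subset of A such that Z^× is non-empty and finite. Then there exists z̄ ∈ Z^× such that γ(Z) = γ(Z + (−z̄)) = min{ord(w) : w ∈ Z + (−z̄), w ≠ 0}, where −z̄ is the inverse of the unit z̄ and 0 is the identity of A. -/
open Pointwise

private lemma gamma_le_gamma_add {A : Type*} [AddCancelMonoid A] (Z : Set A)
    (d : AddUnits A) : gamma Z ≤ gamma (Z + {(d : A)}) := by
  unfold gamma
  refine iSup₂_le fun u hu => ?_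
  have hv : ((u + d : AddUnits A) : A) ∈ Z + {(d : A)} :=
    ⟨(u : A), hu, (d : A), rfl, rfl⟩
  refine le_trans ?_ (le_iSup₂ (u + d) hv)
  refine le_iInf₂ fun w hw => ?_
  obtain ⟨⟨x, hx, y, hy, rfl⟩, hwne⟩ := hw
  rw [Set.mem_singleton_iff] at hy
  subst hy
  have hxu : x ≠ (u : A) := by
    rintro rfl
    exact hwne (by simp)
  have key : (x + (d : A)) + ((-(u + d) : AddUnits A) : A)
      = x + ((-u : AddUnits A) : A) := by
    rw [neg_add_rev]
    push_cast
    rw [add_assoc x, ← add_assoc (d : A), AddUnits.add_neg, zero_add]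
  rw [key]
  exact iInf₂_le x ⟨hx, hxu⟩

theorem stmt17 {A : Type*} [AddCancelMonoid A] (Z : Set A)
    (hne : (Z ∩ {a | IsAddUnit a}).Nonempty)
    (hfin : (Z ∩ {a | IsAddUnit a}).Finite) :
    ∃ zb : AddUnits A, (zb : A) ∈ Z ∧
      gamma Z = gamma (Z + {((-zb : AddUnits A) : A)}) ∧
      gamma Z = ⨅ (w : A) (_ : w ∈ Z + {((-zb : AddUnits A) : A)} ∧ w ≠ 0), ord w := by
  classical
  set f : AddUnits A → ℕ∞ := fun u =>
    ⨅ (x : A) (_ : x ∈ Z ∧ x ≠ (u : A)), ord (x + ((-u : AddUnits A) : A)) with hf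
  set S : Set (AddUnits A) := {u | (u : A) ∈ Z} with hS
  have hSfin : S.Finite := by
    have himg : ((fun u : AddUnits A => (u : A)) '' S) ⊆ Z ∩ {a | IsAddUnit a} := by
      rintro a ⟨u, hu, rfl⟩
      exact ⟨hu, u.isAddUnit⟩
    exact Set.Finite.of_finite_image (hfin.subset himg)
      (fun a _ b _ h => AddUnits.ext h)
  have hSne : S.Nonempty := by
    obtain ⟨a, haZ, hau⟩ := hne
    obtain ⟨u, rfl⟩ := hau
    exact ⟨u, haZ⟩
  obtain ⟨zb, hzb, hmax⟩ := Set.exists_max_image S f hSfin hSne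
  have hgz : gamma Z = f zb := by
    refine le_antisymm (iSup₂_le fun u hu => hmax u hu) ?_
    exact le_iSup₂ (f := fun u _ => f u) zb hzb
  refine ⟨zb, hzb, ?_, ?_⟩
  · refine le_antisymm (gamma_le_gamma_add Z (-zb)) ?_
    have h2 := gamma_le_gamma_add (Z + {((-zb : AddUnits A) : A)}) zb
    have hid : (Z + {((-zb : AddUnits A) : A)}) + {(zb : A)} = Z := by
      rw [add_assoc, Set.singleton_add_singleton, AddUnits.neg_add]
      ext a
      simp [Set.mem_add]
    rwa [hid] at h2
  · rw [hgz, hf]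
    refine le_antisymm (le_iInf₂ fun w hw => ?_) (le_iInf₂ fun x hx => ?_)
    · obtain ⟨⟨x, hx, y, hy, rfl⟩, hwne⟩ := hw
      rw [Set.mem_singleton_iff] at hy
      subst hy
      have hxz : x ≠ (zb : A) := by
        rintro rfl
        exact hwne (by simp)
      exact iInf₂_le x ⟨hx, hxz⟩
    · obtain ⟨hxZ, hxz⟩ := hx
      have hmem : x + ((-zb : AddUnits A) : A) ∈ Z + {((-zb : AddUnits A) : A)} :=
        ⟨x, hxZ, _, rfl, rfl⟩
      have hne0 : x + ((-zb : AddUnits A) : A) ≠ 0 := by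
        intro h
        apply hxz
        have := congrArg (· + (zb : A)) h
        simpa [add_assoc] using this
      exact iInf₂_le _ ⟨hmem, hne0⟩
end
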